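/- If R is a commutative perfect ring, then every nonzero R-module contains a simple submodule. -/

import Mathlib

universe u

/-- `f : P →ₗ[R] M` is a projective cover of `M`. -/
def IsProjectiveCover (R : Type u) [CommRing R] {P M : Type u}
    [AddCommGroup P] [Module R P] [AddCommGroup M] [Module R M] (f : P →ₗ[R] M) : Prop :=
  Module.Projective R P ∧ Function.Surjective f ∧
    ∀ N : Submodule R P, N ⊔ LinearMap.ker f = ⊤ → N = ⊤

/-- A commutative ring is perfect iff every module has a projective cover. -/
def IsPerfectRing (R : Type u) [CommRing R] : Prop :=
  ∀ (M : Type u) (_ : AddCommGroup M) (_ : Module R M),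
    ∃ (P : Type u) (_ : AddCommGroup P) (_ : Module R P) (f : P →ₗ[R] M),
      IsProjectiveCover R f

/-- An almost perfect domain: an integral domain such that every proper quotient is perfect. -/
def IsAPD (R : Type u) [CommRing R] [IsDomain R] : Prop :=
  ∀ I : Ideal R, I ≠ ⊥ → IsPerfectRing (R ⧸ I)

/-!
If `Rx₀ ⊋ Rx₁ ⊋ ⋯` with `xₙ₊₁ = aₙ xₙ`, no `a₀ ⋯ a_N` can divide `a₀ ⋯ a_{N-1}`; so it suffices
that over a perfect ring some such divisibility holds for every sequence `a`. Following Bass, take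
`Q = (ℕ →₀ R) ⧸ ⟨eₙ - aₙ eₙ₊₁⟩`. Its relation submodule is locally split, and a module with a
projective cover `p : P → Q` and locally split relations is projective: for `w ∈ ker p`, an
endomorphism `η` of `P` factoring through the relations with `η w = w` makes `id - η` a lift of
the identity, hence an automorphism, that kills `w`. A section of `ℕ →₀ R → Q` sends
`[e₀] = a₀ ⋯ a_N [e_{N+1}]` to a multiple of `a₀ ⋯ a_N` differing from `e₀` by finitely many
relations, and a functional vanishing on the first `N` relations turns this into
`a₀ ⋯ a_N ∣ a₀ ⋯ a_{N-1}`.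
-/

open Finset

def Submodule.IsLocallySplit {R F : Type*} [Semiring R] [AddCommMonoid F] [Module R F]
    (K : Submodule R F) : Prop :=
  ∀ z ∈ K, ∃ φ : F →ₗ[R] F, φ z = z ∧ LinearMap.range φ ≤ K

namespace IsProjectiveCover

variable {R : Type u} [CommRing R] {P M : Type u} [AddCommGroup P] [Module R P]
  [AddCommGroup M] [Module R M] {p : P →ₗ[R] M}

theorem surjective_of_surjective_comp (hp : IsProjectiveCover R p) {Q : Type*}
    [AddCommGroup Q] [Module R Q] {g : Q →ₗ[R] P} (hg : Function.Surjective (p ∘ₗ g)) :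
    Function.Surjective g := by
  rw [← LinearMap.range_eq_top]
  refine hp.2.2 _ (eq_top_iff.mpr fun u _ => ?_)
  obtain ⟨v, hv⟩ := hg (p u)
  refine Submodule.mem_sup.mpr
    ⟨g v, LinearMap.mem_range_self g v, u - g v, ?_, add_sub_cancel _ _⟩
  rw [LinearMap.mem_ker, map_sub, ← LinearMap.comp_apply, hv, sub_self]

theorem bijective_of_comp_eq (hp : IsProjectiveCover R p) {g : P →ₗ[R] P} (hg : p ∘ₗ g = p) :
    Function.Bijective g := by
  have surjective_of_comp_eq {f : P →ₗ[R] P} (hf : p ∘ₗ f = p) : Function.Surjective f :=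
    hp.surjective_of_surjective_comp (by rw [hf]; exact hp.2.1)
  have := hp.1
  obtain ⟨t, ht⟩ := Module.projective_lifting_property g LinearMap.id (surjective_of_comp_eq hg)
  have htp : p ∘ₗ t = p :=
    calc p ∘ₗ t = (p ∘ₗ g) ∘ₗ t := by rw [hg]
    _ = p := by rw [LinearMap.comp_assoc, ht, LinearMap.comp_id]
  refine ⟨fun u v huv => ?_, surjective_of_comp_eq hg⟩
  obtain ⟨u, rfl⟩ := surjective_of_comp_eq htp u
  obtain ⟨v, rfl⟩ := surjective_of_comp_eq htp v
  simpa only [← LinearMap.comp_apply, ht, LinearMap.id_apply] using congrArg t huv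

theorem injective_of_isLocallySplit_ker (hp : IsProjectiveCover R p) {F : Type*}
    [AddCommGroup F] [Module R F] [Module.Projective R F] {π : F →ₗ[R] M}
    (hπ : Function.Surjective π) (hsplit : (LinearMap.ker π).IsLocallySplit) :
    Function.Injective p := by
  have := hp.1
  obtain ⟨h, hh⟩ := Module.projective_lifting_property p π hp.2.1
  obtain ⟨s, hs⟩ := Module.projective_lifting_property h LinearMap.id
    (hp.surjective_of_surjective_comp (hh ▸ hπ))
  refine (injective_iff_map_eq_zero p).mpr fun w hw => ?_
  obtain ⟨φ, hφw, hφ⟩ := hsplit (s w) <| by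
    rw [LinearMap.mem_ker, ← hh, LinearMap.comp_apply, ← LinearMap.comp_apply h s, hs,
      LinearMap.id_apply, hw]
  set η := h ∘ₗ φ ∘ₗ s
  have hpη : p ∘ₗ η = 0 := by
    ext u
    rw [← hh] at hφ
    exact hφ (LinearMap.mem_range_self φ (s u))
  have hηw : η w = w := by
    simp only [η, LinearMap.comp_apply, hφw, ← LinearMap.comp_apply h s, hs, LinearMap.id_apply]
  have hbij := hp.bijective_of_comp_eq (g := LinearMap.id - η)
    (by rw [LinearMap.comp_sub, hpη, sub_zero, LinearMap.comp_id])
  exact hbij.1 (by simp [hηw])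

theorem projective_of_isLocallySplit_ker (hp : IsProjectiveCover R p) {F : Type*}
    [AddCommGroup F] [Module R F] [Module.Projective R F] {π : F →ₗ[R] M}
    (hπ : Function.Surjective π) (hsplit : (LinearMap.ker π).IsLocallySplit) :
    Module.Projective R M :=
  have := hp.1
  .of_equiv (LinearEquiv.ofBijective p ⟨hp.injective_of_isLocallySplit_ker hπ hsplit, hp.2.1⟩)

end IsProjectiveCover

theorem IsPerfectRing.projective_of_isLocallySplit_ker {R : Type u} [CommRing R]
    (hR : IsPerfectRing R) {F M : Type u} [AddCommGroup F] [Module R F] [Module.Projective R F]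
    [AddCommGroup M] [Module R M] {π : F →ₗ[R] M} (hπ : Function.Surjective π)
    (hsplit : (LinearMap.ker π).IsLocallySplit) : Module.Projective R M := by
  obtain ⟨P, _, _, p, hp⟩ := hR M inferInstance inferInstance
  exact hp.projective_of_isLocallySplit_ker hπ hsplit

theorem Submodule.exists_mem_span_image_Iio {R M : Type*} [Semiring R] [AddCommMonoid M]
    [Module R M] (y : ℕ → M) {z : M} (hz : z ∈ span R (Set.range y)) :
    ∃ N, z ∈ span R (y '' Set.Iio N) := by
  have hrange : Set.range y = ⋃ N, y '' Set.Iio N := by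
    ext
    simp only [Set.mem_range, Set.mem_iUnion, Set.mem_image, Set.mem_Iio]
    exact ⟨fun ⟨n, hn⟩ => ⟨n + 1, n, n.lt_succ_self, hn⟩, fun ⟨_, n, _, hn⟩ => ⟨n, hn⟩⟩
  rwa [hrange, span_iUnion, mem_iSup_of_directed _ (Monotone.directed_le fun m n hmn =>
    span_mono (Set.image_mono (Set.Iio_subset_Iio hmn)))] at hz

section Bass

variable {R : Type*} [CommRing R] (a : ℕ → R)

/-- The relation `eₙ = aₙ eₙ₊₁` of Bass's module `(ℕ →₀ R) ⧸ bassRelations a`, the direct limit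
of `R →[a₀] R →[a₁] R → ⋯`. -/
noncomputable def bassRelation (n : ℕ) : ℕ →₀ R :=
  Finsupp.single n 1 - Finsupp.single (n + 1) (a n)

noncomputable def bassRelations : Submodule R (ℕ →₀ R) :=
  Submodule.span R (Set.range (bassRelation a))

theorem bassRelation_mem (n : ℕ) : bassRelation a n ∈ bassRelations a :=
  Submodule.subset_span ⟨n, rfl⟩

theorem isLocallySplit_bassRelations : (bassRelations a).IsLocallySplit := by
  intro z hz
  obtain ⟨N, hzN⟩ := Submodule.exists_mem_span_image_Iio (bassRelation a) hz
  -- `d k` telescopes to `eₖ - (aₖ ⋯ a_{N-1}) e_N`, written as a combination of relations.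
  let d : ℕ → ℕ →₀ R := fun k => ∑ j ∈ Ico k N, (∏ i ∈ Ico k j, a i) • bassRelation a j
  have hd : ∀ k < N, d k = bassRelation a k + a k • d (k + 1) := by
    intro k hk
    simp only [d, sum_eq_sum_Ico_succ_bot hk, Ico_self, prod_empty, one_smul, smul_sum, smul_smul]
    congr 1
    refine sum_congr rfl fun j hj => ?_
    rw [prod_eq_prod_Ico_succ_bot (by simp at hj; omega)]
  refine ⟨Finsupp.linearCombination R d, ?_, ?_⟩
  · refine (Submodule.span_le (p := LinearMap.eqLocus _ LinearMap.id)).mpr ?_ hzN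
    rintro _ ⟨n, hn, rfl⟩
    simp only [SetLike.mem_coe, LinearMap.mem_eqLocus, LinearMap.id_apply, bassRelation, map_sub,
      Finsupp.linearCombination_single, one_smul]
    rw [hd n hn, bassRelation]
    abel
  · rw [Finsupp.range_linearCombination, Submodule.span_le]
    rintro _ ⟨k, rfl⟩
    exact sum_mem fun j _ => Submodule.smul_mem _ _ (bassRelation_mem a j)

theorem mkQ_single_zero_eq_prod_smul (n : ℕ) :
    (bassRelations a).mkQ (Finsupp.single 0 1) =
      (∏ i ∈ range n, a i) • (bassRelations a).mkQ (Finsupp.single n 1) := by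
  induction n with
  | zero => simp
  | succ n ih =>
    have hrel : (bassRelations a).mkQ (Finsupp.single n 1) =
        a n • (bassRelations a).mkQ (Finsupp.single (n + 1) 1) := by
      rw [← map_smul, Finsupp.smul_single_one, ← sub_eq_zero, ← map_sub, ← LinearMap.mem_ker,
        Submodule.ker_mkQ]
      exact bassRelation_mem a n
    rw [ih, hrel, prod_range_succ, mul_smul]

noncomputable def bassFunctional (N : ℕ) : (ℕ →₀ R) →ₗ[R] R :=
  Finsupp.linearCombination R fun j => ∏ i ∈ Ico j N, a i

theorem span_bassRelation_Iio_le_ker_bassFunctional (N : ℕ) :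
    Submodule.span R (bassRelation a '' Set.Iio N) ≤ LinearMap.ker (bassFunctional a N) := by
  rw [Submodule.span_le]
  rintro _ ⟨n, hn, rfl⟩
  simp only [SetLike.mem_coe, LinearMap.mem_ker, bassFunctional, bassRelation, map_sub,
    Finsupp.linearCombination_single, smul_eq_mul, one_mul, prod_eq_prod_Ico_succ_bot hn, sub_self]

end Bass

theorem IsPerfectRing.exists_prod_range_succ_dvd_prod_range {R : Type u} [CommRing R]
    (hR : IsPerfectRing R) (a : ℕ → R) :
    ∃ N, ∏ i ∈ range (N + 1), a i ∣ ∏ i ∈ range N, a i := by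
  set K := bassRelations a
  have : Module.Projective R ((ℕ →₀ R) ⧸ K) := hR.projective_of_isLocallySplit_ker
    K.mkQ_surjective (by rw [K.ker_mkQ]; exact isLocallySplit_bassRelations a)
  obtain ⟨σ, hσ⟩ := Module.projective_lifting_property K.mkQ LinearMap.id K.mkQ_surjective
  have hv : σ (K.mkQ (Finsupp.single 0 1)) - Finsupp.single 0 1 ∈ K :=
    (Submodule.Quotient.eq K).mp (LinearMap.congr_fun hσ _)
  obtain ⟨N, hN⟩ := Submodule.exists_mem_span_image_Iio (bassRelation a) hv
  replace hN := span_bassRelation_Iio_le_ker_bassFunctional a N hN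
  rw [LinearMap.mem_ker, map_sub, sub_eq_zero] at hN
  refine ⟨N, bassFunctional a N (σ (K.mkQ (Finsupp.single (N + 1) 1))), ?_⟩
  calc ∏ i ∈ Finset.range N, a i = bassFunctional a N (Finsupp.single 0 1) := by
        rw [bassFunctional, Finsupp.linearCombination_single, one_smul, Finset.range_eq_Ico]
  _ = bassFunctional a N (σ (K.mkQ (Finsupp.single 0 1))) := hN.symm
  _ = _ := by rw [mkQ_single_zero_eq_prod_smul a (N + 1), map_smul, map_smul, smul_eq_mul]

theorem Submodule.exists_smul_ne_zero_and_notMem_span_smul {R M : Type*} [CommRing R]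
    [AddCommGroup M] [Module R M] {x : M} (hx : x ≠ 0) (hatom : ¬IsAtom (span R {x})) :
    ∃ r : R, r • x ≠ 0 ∧ x ∉ span R {r • x} := by
  obtain ⟨L, hLx, hL⟩ : ∃ L < span R {x}, L ≠ ⊥ := by
    simpa [IsAtom, span_singleton_eq_bot, hx] using hatom
  obtain ⟨z, hzL, hz⟩ := exists_mem_ne_zero_of_ne_bot hL
  obtain ⟨r, rfl⟩ := mem_span_singleton.mp (hLx.le hzL)
  refine ⟨r, hz, fun hxz => hLx.not_ge ?_⟩
  exact (span_singleton_le_iff_mem _ _).mpr (span_le.mpr (Set.singleton_subset_iff.mpr hzL) hxz)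

theorem Submodule.exists_isAtom_of_forall_prod_range_succ_dvd {R M : Type*} [CommRing R]
    (hR : ∀ a : ℕ → R, ∃ N, ∏ i ∈ range (N + 1), a i ∣ ∏ i ∈ range N, a i)
    [AddCommGroup M] [Module R M] [Nontrivial M] : ∃ L : Submodule R M, IsAtom L := by
  by_contra! hno
  choose! r hr0 hr using fun x (hx : x ≠ 0) =>
    exists_smul_ne_zero_and_notMem_span_smul (R := R) hx (hno _)
  obtain ⟨x₀, hx₀⟩ := exists_ne (0 : M)
  let x : ℕ → M := fun n => (fun y => r y • y)^[n] x₀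
  have hx_succ (n : ℕ) : x (n + 1) = r (x n) • x n := Function.iterate_succ_apply' _ n x₀
  have hx_ne (n : ℕ) : x n ≠ 0 := by
    induction n with
    | zero => exact hx₀
    | succ n ih => rw [hx_succ]; exact hr0 _ ih
  have hx_eq (n : ℕ) : x n = (∏ i ∈ range n, r (x i)) • x₀ := by
    induction n with
    | zero => simp [x]
    | succ n ih => rw [hx_succ, prod_range_succ, mul_comm, mul_smul, ← ih]
  obtain ⟨N, c, hc⟩ := hR fun n => r (x n)
  refine hr (x N) (hx_ne N) (mem_span_singleton.mpr ⟨c, ?_⟩)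
  rw [← hx_succ, hx_eq, hx_eq, hc, smul_smul, mul_comm]

/-- Over a commutative perfect ring, every nonzero module contains a simple submodule. -/
theorem exists_simple_submodule_of_perfect (R : Type u) [CommRing R] (hR : IsPerfectRing R)
    (M : Type u) [AddCommGroup M] [Module R M] (hM : Nontrivial M) :
    ∃ L : Submodule R M, IsAtom L :=
  Submodule.exists_isAtom_of_forall_prod_range_succ_dvd hR.exists_prod_range_succ_dvd_prod_range
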